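/- Fix an integer d ≥ 1, a real Λ > 1, m ∈ ℕ, and reals q > 0 and q′ > 0. Define h(z) := Λ^{−m}·h_d(Λ^{m/d}·z), h′(z) := Λ^{−(m+1)}·h_d(Λ^{(m+1)/d}·z), and β : ℂ × ℝ → ℂ × ℝ by β(x,t) := ( ((q−t)/q)·h(x) + (t/q)·h′(x), (q′/q)·t ). Then for all x, y ∈ ℂ with |x| ≤ Λ^{−(m+1)/d} and |y| ≤ Λ^{−(m+1)/d} and all t, s ∈ [0, q]: |β₁(x,t) − β₁(y,s)| + |β₂(x,t) − β₂(y,s)| ≤ d·Λ^{−m(1−1/d)}·|x − y| + (2·Λ^{−m}/q + q′/q)·|t − s|; in particular β is Lipschitz on the cylinder {|x| ≤ Λ^{−(m+1)/d}} × [0, q]. -/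

import Mathlib

/-- The winding map of degree `d`: `h_d(z) = |z|^(1-d) * z^d` for `|z| ≤ 1`
(so `h_d(r e^{it}) = r e^{idt}` there), and `h_d(z) = z^d` for `|z| ≥ 1`. -/
noncomputable def windingMap (d : ℕ) (z : ℂ) : ℂ :=
  if ‖z‖ ≤ 1 then ((‖z‖ ^ ((1 : ℝ) - (d : ℝ)) : ℝ) : ℂ) * z ^ d
  else z ^ d

/-- The rescaled winding map `h(z) = Λ^(-m) · h_d(Λ^(m/d) · z)`. -/
noncomputable def rsWinding (d : ℕ) (Λ : ℝ) (m : ℕ) (z : ℂ) : ℂ :=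
  ((Λ ^ (-(m : ℝ)) : ℝ) : ℂ) * windingMap d (((Λ ^ ((m : ℝ) / (d : ℝ)) : ℝ) : ℂ) * z)

/-! On the closed unit disk `h_d(r a) = r a^d` for `|a| = 1`. Since
`|r a - s b|² = (r - s)² + r s |a - b|²` and `|a^d - b^d| ≤ d |a - b|` on the circle, `h_d` is
`d`-Lipschitz there; hence `h` and `h'` are `d Λ^(-m(1-1/d))`-Lipschitz on the cylinder and
bounded by `Λ^(-m)`. The first component of `β` is a convex combination of `h` and `h'` whose
weights move by `|t - s| / q`, which costs at most `2 Λ^(-m) |t - s| / q`; the second component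
is linear. -/

open Set

theorem norm_pow_sub_pow_le_of_norm_le_one {R : Type*} [SeminormedRing R] [NormOneClass R]
    {a b : R} (ha : ‖a‖ ≤ 1) (hb : ‖b‖ ≤ 1) (n : ℕ) :
    ‖a ^ n - b ^ n‖ ≤ n * ‖a - b‖ := by
  induction n with
  | zero => simp
  | succ n ih =>
    have hpow : ‖a ^ n‖ ≤ 1 := (norm_pow_le a n).trans (pow_le_one₀ (norm_nonneg a) ha)
    calc ‖a ^ (n + 1) - b ^ (n + 1)‖ = ‖a ^ n * (a - b) + (a ^ n - b ^ n) * b‖ := by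
          rw [mul_sub, sub_mul, sub_add_sub_cancel, pow_succ, pow_succ]
      _ ≤ ‖a ^ n‖ * ‖a - b‖ + ‖a ^ n - b ^ n‖ * ‖b‖ :=
          (norm_add_le _ _).trans (add_le_add (norm_mul_le _ _) (norm_mul_le _ _))
      _ ≤ 1 * ‖a - b‖ + (n * ‖a - b‖) * 1 := by gcongr
      _ = (n + 1 : ℕ) * ‖a - b‖ := by push_cast; ring

theorem norm_smul_sub_smul_sq {F : Type*} [NormedAddCommGroup F] [InnerProductSpace ℝ F]
    {a b : F} (ha : ‖a‖ = 1) (hb : ‖b‖ = 1) (r s : ℝ) :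
    ‖r • a - s • b‖ ^ 2 = (r - s) ^ 2 + r * s * ‖a - b‖ ^ 2 := by
  rw [norm_sub_sq_real, norm_sub_sq_real, norm_smul, norm_smul, real_inner_smul_left,
    real_inner_smul_right, ha, hb, Real.norm_eq_abs, Real.norm_eq_abs, mul_pow, mul_pow, sq_abs,
    sq_abs]
  ring

theorem norm_smul_pow_sub_smul_pow_le {a b : ℂ} (ha : ‖a‖ = 1) (hb : ‖b‖ = 1) {r s : ℝ}
    (hr : 0 ≤ r) (hs : 0 ≤ s) {d : ℕ} (hd : 1 ≤ d) :
    ‖r • a ^ d - s • b ^ d‖ ≤ d * ‖r • a - s • b‖ := by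
  have hd' : (1 : ℝ) ≤ (d : ℝ) ^ 2 := one_le_pow₀ (by exact_mod_cast hd)
  have hpow : ‖a ^ d - b ^ d‖ ^ 2 ≤ (d : ℝ) ^ 2 * ‖a - b‖ ^ 2 := by
    rw [← mul_pow]
    gcongr
    exact norm_pow_sub_pow_le_of_norm_le_one ha.le hb.le d
  rw [← pow_le_pow_iff_left₀ (norm_nonneg _) (by positivity) two_ne_zero, mul_pow,
    norm_smul_sub_smul_sq (by simp [ha]) (by simp [hb]), norm_smul_sub_smul_sq ha hb]
  have hrad : (r - s) ^ 2 ≤ (d : ℝ) ^ 2 * (r - s) ^ 2 := le_mul_of_one_le_left (sq_nonneg _) hd'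
  have hang : r * s * ‖a ^ d - b ^ d‖ ^ 2 ≤ r * s * ((d : ℝ) ^ 2 * ‖a - b‖ ^ 2) := by gcongr
  linarith

theorem exists_windingMap_eq_smul (d : ℕ) {z : ℂ} (hz : ‖z‖ ≤ 1) :
    ∃ a : ℂ, ‖a‖ = 1 ∧ z = ‖z‖ • a ∧ windingMap d z = ‖z‖ • a ^ d := by
  rcases eq_or_ne z 0 with rfl | hz0
  · refine ⟨1, by simp, by simp, ?_⟩
    rcases d with _ | d <;> simp [windingMap]
  · have hn : (0 : ℝ) < ‖z‖ := norm_pos_iff.mpr hz0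
    have hC : ((‖z‖ : ℝ) : ℂ) ≠ 0 := Complex.ofReal_ne_zero.2 hn.ne'
    refine ⟨z / ‖z‖, by simp [hn.ne'], ?_, ?_⟩
    · rw [Complex.real_smul, mul_div_cancel₀ _ hC]
    · rw [windingMap, if_pos hz, Complex.real_smul, div_pow, Real.rpow_sub hn, Real.rpow_one,
        Real.rpow_natCast]
      push_cast
      field_simp

theorem norm_windingMap {d : ℕ} {z : ℂ} (hz : ‖z‖ ≤ 1) : ‖windingMap d z‖ = ‖z‖ := by
  obtain ⟨a, ha, -, hw⟩ := exists_windingMap_eq_smul d hz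
  rw [hw, norm_smul, norm_pow, ha, one_pow, mul_one, norm_norm]

theorem norm_windingMap_sub_le {d : ℕ} (hd : 1 ≤ d) {u v : ℂ} (hu : ‖u‖ ≤ 1) (hv : ‖v‖ ≤ 1) :
    ‖windingMap d u - windingMap d v‖ ≤ d * ‖u - v‖ := by
  obtain ⟨a, ha, hua, hwu⟩ := exists_windingMap_eq_smul d hu
  obtain ⟨b, hb, hvb, hwv⟩ := exists_windingMap_eq_smul d hv
  calc ‖windingMap d u - windingMap d v‖ ≤ d * ‖‖u‖ • a - ‖v‖ • b‖ := by
        rw [hwu, hwv]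
        exact norm_smul_pow_sub_smul_pow_le ha hb (norm_nonneg u) (norm_nonneg v) hd
    _ = d * ‖u - v‖ := by rw [← hua, ← hvb]

theorem norm_ofReal_mul {r : ℝ} (hr : 0 ≤ r) (z : ℂ) : ‖(r : ℂ) * z‖ = r * ‖z‖ := by
  rw [norm_mul, Complex.norm_real, Real.norm_of_nonneg hr]

section rsWinding

variable {d : ℕ} {Λ : ℝ} {m : ℕ}

theorem norm_rsWinding_le (hΛ : 0 < Λ) {x : ℂ} (hx : Λ ^ ((m : ℝ) / d) * ‖x‖ ≤ 1) :
    ‖rsWinding d Λ m x‖ ≤ Λ ^ (-(m : ℝ)) := by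
  have hx' : ‖((Λ ^ ((m : ℝ) / d) : ℝ) : ℂ) * x‖ ≤ 1 := by rwa [norm_ofReal_mul (by positivity)]
  rw [rsWinding, norm_ofReal_mul (by positivity), norm_windingMap hx']
  exact mul_le_of_le_one_right (by positivity) hx'

theorem norm_rsWinding_sub_le (hd : 1 ≤ d) (hΛ : 0 < Λ) {x y : ℂ}
    (hx : Λ ^ ((m : ℝ) / d) * ‖x‖ ≤ 1) (hy : Λ ^ ((m : ℝ) / d) * ‖y‖ ≤ 1) :
    ‖rsWinding d Λ m x - rsWinding d Λ m y‖ ≤ d * Λ ^ (-(m : ℝ) * (1 - 1 / d)) * ‖x - y‖ := by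
  set c := Λ ^ ((m : ℝ) / d)
  have hc : 0 ≤ c := by positivity
  have hd0 : (d : ℝ) ≠ 0 := by positivity
  have hexp : Λ ^ (-(m : ℝ)) * c = Λ ^ (-(m : ℝ) * (1 - 1 / d)) := by
    rw [← Real.rpow_add hΛ]
    congr 1
    field_simp
    ring
  calc ‖rsWinding d Λ m x - rsWinding d Λ m y‖
      = Λ ^ (-(m : ℝ)) * ‖windingMap d (c * x) - windingMap d (c * y)‖ := by
        rw [rsWinding, rsWinding, ← mul_sub, norm_ofReal_mul (by positivity)]
    _ ≤ Λ ^ (-(m : ℝ)) * (d * ‖(c : ℂ) * x - c * y‖) := by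
        gcongr
        exact norm_windingMap_sub_le hd (by rwa [norm_ofReal_mul hc])
          (by rwa [norm_ofReal_mul hc])
    _ = d * Λ ^ (-(m : ℝ) * (1 - 1 / d)) * ‖x - y‖ := by
        rw [← mul_sub, norm_ofReal_mul hc, ← hexp]
        ring

end rsWinding

theorem rpow_div_mul_le_one {Λ : ℝ} (hΛ : 1 ≤ Λ) (d : ℕ) {k n r : ℝ} (hkn : k ≤ n)
    (hr : r ≤ Λ ^ (-n / d)) : Λ ^ (k / d) * r ≤ 1 :=
  calc Λ ^ (k / d) * r ≤ Λ ^ (k / d) * Λ ^ (-n / d) := by gcongr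
    _ = Λ ^ ((k - n) / d) := by rw [← Real.rpow_add (by linarith)]; ring_nf
    _ ≤ 1 := Real.rpow_le_one_of_one_le_of_nonpos hΛ
        (div_nonpos_of_nonpos_of_nonneg (by linarith) d.cast_nonneg)

theorem norm_interp_sub_interp_le {E : Type*} [SeminormedAddCommGroup E] [NormedSpace ℝ E]
    {a b a' b' : E} {t s L M : ℝ} (ht : t ∈ Icc (0 : ℝ) 1)
    (ha : ‖a - a'‖ ≤ L) (hb : ‖b - b'‖ ≤ L) (ha' : ‖a'‖ ≤ M) (hb' : ‖b'‖ ≤ M) :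
    ‖((1 - t) • a + t • b) - ((1 - s) • a' + s • b')‖ ≤ L + 2 * M * |t - s| :=
  calc ‖((1 - t) • a + t • b) - ((1 - s) • a' + s • b')‖
      = ‖(1 - t) • (a - a') + t • (b - b') + (t - s) • (b' - a')‖ := by congr 1; module
    _ ≤ ‖(1 - t) • (a - a')‖ + ‖t • (b - b')‖ + ‖(t - s) • (b' - a')‖ := norm_add₃_le
    _ ≤ (1 - t) * L + t * L + |t - s| * (M + M) := by
        rw [norm_smul, norm_smul, norm_smul, Real.norm_of_nonneg (sub_nonneg.2 ht.2),
          Real.norm_of_nonneg ht.1, Real.norm_eq_abs]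
        gcongr
        · linarith [ht.2]
        · exact ht.1
        · exact (norm_sub_le _ _).trans (add_le_add hb' ha')
    _ = L + 2 * M * |t - s| := by ring

theorem LipschitzOnWith.of_dist_fst_add_dist_snd_le {α β γ δ : Type*} [PseudoMetricSpace α]
    [PseudoMetricSpace β] [PseudoMetricSpace γ] [PseudoMetricSpace δ] {f : α × β → γ × δ}
    {s : Set (α × β)} {A B : ℝ} (hA : 0 ≤ A) (hB : 0 ≤ B)
    (h : ∀ p ∈ s, ∀ p' ∈ s,
      dist (f p).1 (f p').1 + dist (f p).2 (f p').2 ≤ A * dist p.1 p'.1 + B * dist p.2 p'.2) :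
    LipschitzOnWith (A + B).toNNReal f s :=
  LipschitzOnWith.of_dist_le' fun p hp p' hp' ↦ by
    rw [Prod.dist_eq, Prod.dist_eq]
    calc max (dist (f p).1 (f p').1) (dist (f p).2 (f p').2)
        ≤ dist (f p).1 (f p').1 + dist (f p).2 (f p').2 :=
          max_le_add_of_nonneg dist_nonneg dist_nonneg
      _ ≤ A * dist p.1 p'.1 + B * dist p.2 p'.2 := h p hp p' hp'
      _ ≤ A * max (dist p.1 p'.1) (dist p.2 p'.2) + B * max (dist p.1 p'.1) (dist p.2 p'.2) := by
          gcongr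
          exacts [le_max_left _ _, le_max_right _ _]
      _ = (A + B) * max (dist p.1 p'.1) (dist p.2 p'.2) := by ring

noncomputable def betaMap (d : ℕ) (Λ : ℝ) (m : ℕ) (q q' : ℝ) (p : ℂ × ℝ) : ℂ × ℝ :=
  ((((q - p.2) / q : ℝ) : ℂ) * rsWinding d Λ m p.1
      + ((p.2 / q : ℝ) : ℂ) * rsWinding d Λ (m + 1) p.1,
    q' / q * p.2)

section betaMap

variable {d : ℕ} {Λ : ℝ} {m : ℕ} {q q' : ℝ}

theorem betaMap_fst (hq : 0 < q) (p : ℂ × ℝ) :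
    (betaMap d Λ m q q' p).1
      = (1 - p.2 / q) • rsWinding d Λ m p.1 + (p.2 / q) • rsWinding d Λ (m + 1) p.1 := by
  rw [betaMap, Complex.real_smul, Complex.real_smul, one_sub_div hq.ne']

theorem norm_betaMap_fst_sub_le (hd : 1 ≤ d) (hΛ : 1 ≤ Λ) (hq : 0 < q) {p p' : ℂ × ℝ}
    (hx : ‖p.1‖ ≤ Λ ^ (-((m : ℝ) + 1) / d)) (hy : ‖p'.1‖ ≤ Λ ^ (-((m : ℝ) + 1) / d))
    (ht : p.2 ∈ Icc 0 q) :
    ‖(betaMap d Λ m q q' p).1 - (betaMap d Λ m q q' p').1‖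
      ≤ d * Λ ^ (-(m : ℝ) * (1 - 1 / d)) * ‖p.1 - p'.1‖
        + 2 * Λ ^ (-(m : ℝ)) / q * |p.2 - p'.2| := by
  have hΛ0 : 0 < Λ := one_pos.trans_le hΛ
  have hscale : ∀ k : ℕ, k ≤ m + 1 → ∀ z : ℂ, ‖z‖ ≤ Λ ^ (-((m : ℝ) + 1) / d) →
      Λ ^ ((k : ℝ) / d) * ‖z‖ ≤ 1 := fun k hk z hz ↦
    rpow_div_mul_le_one hΛ d (by exact_mod_cast hk) hz
  have hexp : Λ ^ (-((m + 1 : ℕ) : ℝ) * (1 - 1 / d)) ≤ Λ ^ (-(m : ℝ) * (1 - 1 / d)) := by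
    have : 1 / (d : ℝ) ≤ 1 := div_le_one_of_le₀ (by exact_mod_cast hd) d.cast_nonneg
    exact Real.rpow_le_rpow_of_exponent_le hΛ (by push_cast; nlinarith)
  have hlip := norm_rsWinding_sub_le hd hΛ0 (hscale m m.le_succ _ hx) (hscale m m.le_succ _ hy)
  have hlip' : ‖rsWinding d Λ (m + 1) p.1 - rsWinding d Λ (m + 1) p'.1‖
      ≤ d * Λ ^ (-(m : ℝ) * (1 - 1 / d)) * ‖p.1 - p'.1‖ :=
    (norm_rsWinding_sub_le hd hΛ0 (hscale _ le_rfl _ hx) (hscale _ le_rfl _ hy)).trans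
      (by gcongr)
  have hbd := norm_rsWinding_le hΛ0 (hscale m m.le_succ _ hy)
  have hbd' : ‖rsWinding d Λ (m + 1) p'.1‖ ≤ Λ ^ (-(m : ℝ)) :=
    (norm_rsWinding_le hΛ0 (hscale _ le_rfl _ hy)).trans
      (Real.rpow_le_rpow_of_exponent_le hΛ (by push_cast; linarith))
  have hts : p.2 / q ∈ Icc (0 : ℝ) 1 := ⟨div_nonneg ht.1 hq.le, (div_le_one hq).2 ht.2⟩
  calc ‖(betaMap d Λ m q q' p).1 - (betaMap d Λ m q q' p').1‖
      ≤ d * Λ ^ (-(m : ℝ) * (1 - 1 / d)) * ‖p.1 - p'.1‖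
          + 2 * Λ ^ (-(m : ℝ)) * |p.2 / q - p'.2 / q| := by
        rw [betaMap_fst hq, betaMap_fst hq]
        exact norm_interp_sub_interp_le hts hlip hlip' hbd hbd'
    _ = _ := by rw [← sub_div, abs_div, abs_of_pos hq]; ring

theorem norm_betaMap_fst_sub_add_abs_snd_sub_le (hd : 1 ≤ d) (hΛ : 1 ≤ Λ) (hq : 0 < q)
    (hq' : 0 ≤ q') {p p' : ℂ × ℝ} (hx : ‖p.1‖ ≤ Λ ^ (-((m : ℝ) + 1) / d))
    (hy : ‖p'.1‖ ≤ Λ ^ (-((m : ℝ) + 1) / d)) (ht : p.2 ∈ Icc 0 q) :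
    ‖(betaMap d Λ m q q' p).1 - (betaMap d Λ m q q' p').1‖
        + |(betaMap d Λ m q q' p).2 - (betaMap d Λ m q q' p').2|
      ≤ d * Λ ^ (-(m : ℝ) * (1 - 1 / d)) * ‖p.1 - p'.1‖
        + (2 * Λ ^ (-(m : ℝ)) / q + q' / q) * |p.2 - p'.2| := by
  have hsnd : |(betaMap d Λ m q q' p).2 - (betaMap d Λ m q q' p').2| = q' / q * |p.2 - p'.2| := by
    rw [betaMap, betaMap, ← mul_sub, abs_mul, abs_of_nonneg (div_nonneg hq' hq.le)]
  linarith [norm_betaMap_fst_sub_le hd hΛ hq hx hy ht (q' := q')]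

end betaMap

/-- The interpolation map `β(x,t) = (((q−t)/q)·h(x) + (t/q)·h′(x), (q′/q)·t)` between the
cylinders `{|x| ≤ Λ^(-(m+1)/d)} × [0,q]` and `{|x| ≤ Λ^(-(m+1))} × [0,q′]` satisfies the
explicit Lipschitz bound
`|β₁(x,t) − β₁(y,s)| + |β₂(x,t) − β₂(y,s)| ≤ d·Λ^(−m(1−1/d))·|x−y| + (2Λ^(−m)/q + q′/q)·|t−s|`;
in particular `β` is Lipschitz on the cylinder. -/
theorem beta_lipschitz (d : ℕ) (hd : 1 ≤ d) (Λ : ℝ) (hΛ : 1 < Λ) (m : ℕ)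
    (q q' : ℝ) (hq : 0 < q) (hq' : 0 < q') :
    (∀ x y : ℂ, ‖x‖ ≤ Λ ^ (-((m : ℝ) + 1) / (d : ℝ)) →
      ‖y‖ ≤ Λ ^ (-((m : ℝ) + 1) / (d : ℝ)) →
      ∀ t s : ℝ, t ∈ Set.Icc 0 q → s ∈ Set.Icc 0 q →
      ‖((((q - t) / q : ℝ) : ℂ) * rsWinding d Λ m x
            + ((t / q : ℝ) : ℂ) * rsWinding d Λ (m + 1) x
          - ((((q - s) / q : ℝ) : ℂ) * rsWinding d Λ m y
            + ((s / q : ℝ) : ℂ) * rsWinding d Λ (m + 1) y))‖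
        + |(q' / q) * t - (q' / q) * s|
      ≤ (d : ℝ) * Λ ^ (-(m : ℝ) * (1 - 1 / (d : ℝ))) * ‖x - y‖
        + (2 * Λ ^ (-(m : ℝ)) / q + q' / q) * |t - s|) ∧
    ∃ K : NNReal, LipschitzOnWith K
      (fun p : ℂ × ℝ =>
        ((((q - p.2) / q : ℝ) : ℂ) * rsWinding d Λ m p.1
            + ((p.2 / q : ℝ) : ℂ) * rsWinding d Λ (m + 1) p.1,
          (q' / q) * p.2))
      {p : ℂ × ℝ | ‖p.1‖ ≤ Λ ^ (-((m : ℝ) + 1) / (d : ℝ)) ∧ p.2 ∈ Set.Icc 0 q} := by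
  have hA : 0 ≤ (d : ℝ) * Λ ^ (-(m : ℝ) * (1 - 1 / (d : ℝ))) := by positivity
  have hB : 0 ≤ 2 * Λ ^ (-(m : ℝ)) / q + q' / q := by positivity
  refine ⟨fun x y hx hy t s ht _ ↦ norm_betaMap_fst_sub_add_abs_snd_sub_le hd hΛ.le hq hq'.le
    (p := (x, t)) (p' := (y, s)) hx hy ht, _,
    LipschitzOnWith.of_dist_fst_add_dist_snd_le hA hB ?_⟩
  rintro p ⟨hx, ht⟩ p' ⟨hy, -⟩
  simp only [Complex.dist_eq, Real.dist_eq]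
  exact norm_betaMap_fst_sub_add_abs_snd_sub_le hd hΛ.le hq hq'.le hx hy ht
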